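/- arXiv:0910.2825 — 5 statements merged into one kernel-verified Lean document; each statement's English description precedes it below -/
import Mathlib

section
/- In a lattice ordered effect algebra E, the following are equivalent: (a) for all a,b, (a∨b)⊖a = b⊖(a∧b) (i.e. E is an MV-effect algebra); (b) for all a,b, a∧b = 0 implies a ≤ b'; (c) for all a,b, a⊖(a∧b) ≤ b'; (d) for all a,b there exist a₁, b₁, c such that a₁⊕b₁⊕c is defined, a₁⊕c = a, and b₁⊕c = b. -/
universe u

/-- An effect algebra: a partial commutative, associative operation `add`
(modelled as an `Option`-valued total operation), with constants `zero`, `one`,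
unique orthosupplements, and `a ⊕ 1` defined only for `a = 0`. -/
structure EffectAlgebra (α : Type u) where
  add : α → α → Option α
  zero : α
  one : α
  add_comm : ∀ a b : α, add a b = add b a
  add_assoc : ∀ a b c ab abc : α, add a b = some ab → add ab c = some abc →
    ∃ bc : α, add b c = some bc ∧ add a bc = some abc
  orthosupp : ∀ a : α, ∃! a' : α, add a a' = some one
  add_one : ∀ a b : α, add a one = some b → a = zero

namespace EffectAlgebra

variable {α : Type u}

/-- The induced order: `a ≤ b` iff `∃ c, a ⊕ c = b`. -/
def le (E : EffectAlgebra α) (a b : α) : Prop := ∃ c, E.add a c = some b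

/-- The orthosupplement `a'`. -/
noncomputable def compl (E : EffectAlgebra α) (a : α) : α :=
  (E.orthosupp a).exists.choose

open Classical in
/-- The partial difference `b ⊖ a` (junk value `0` when `a ≤ b` fails). -/
noncomputable def sub (E : EffectAlgebra α) (b a : α) : α :=
  if h : ∃ c, E.add a c = some b then h.choose else E.zero

/-- Iterated partial sum of a list of elements. -/
noncomputable def osum (E : EffectAlgebra α) : List α → Option α
  | [] => some E.zero
  | a :: l => (E.osum l).bind fun s => E.add a s

end EffectAlgebra

namespace EffectAlgebra

section Basic

variable {α : Type u} (E : EffectAlgebra α)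

theorem assoc_left {a b c bc abc : α} (h1 : E.add b c = some bc)
    (h2 : E.add a bc = some abc) :
    ∃ ab, E.add a b = some ab ∧ E.add ab c = some abc := by
  have h2' : E.add bc a = some abc := by rw [E.add_comm]; exact h2
  obtain ⟨ca, hca, hbca⟩ := E.add_assoc b c a bc abc h1 h2'
  have hca' : E.add ca b = some abc := by rw [E.add_comm]; exact hbca
  obtain ⟨ab, hab, habc⟩ := E.add_assoc c a b ca abc hca hca'
  exact ⟨ab, hab, by rw [E.add_comm]; exact habc⟩

theorem compl_add (a : α) : E.add a (E.compl a) = some E.one :=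
  (E.orthosupp a).exists.choose_spec

theorem compl_eq {a b : α} (h : E.add a b = some E.one) : b = E.compl a := by
  obtain ⟨x, hx, hu⟩ := E.orthosupp a
  rw [hu b h, hu (E.compl a) (E.compl_add a)]

theorem one_zero : E.add E.one E.zero = some E.one := by
  have h := E.compl_add E.one
  have hz : E.compl E.one = E.zero :=
    E.add_one (E.compl E.one) E.one (by rw [E.add_comm]; exact h)
  rw [hz] at h; exact h

theorem compl_compl' (a : α) : E.compl (E.compl a) = a :=
  (E.compl_eq (by rw [E.add_comm]; exact E.compl_add a)).symm

theorem add_zero' (a : α) : E.add a E.zero = some a := by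
  have key : ∀ x : α, E.add (E.compl x) E.zero = some (E.compl x) := by
    intro x
    have h1 := E.compl_add x
    have h2 := E.one_zero
    obtain ⟨bc, hbc, habc⟩ := E.add_assoc x (E.compl x) E.zero E.one E.one h1 h2
    have hbce : bc = E.compl x := E.compl_eq habc
    rwa [hbce] at hbc
  have h := key (E.compl a)
  rwa [E.compl_compl'] at h

theorem cancel {a b c d : α} (h1 : E.add a b = some d) (h2 : E.add a c = some d) :
    b = c := by
  have hd := E.compl_add d
  have step : ∀ x, E.add a x = some d →
      ∃ f, E.add (E.compl d) a = some f ∧ E.compl x = f := by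
    intro x hx
    obtain ⟨e, he, hae⟩ := E.add_assoc a x (E.compl d) d E.one hx hd
    have he' : e = E.compl a := E.compl_eq hae
    subst he'
    have h1' : E.add (E.compl a) a = some E.one := by
      rw [E.add_comm]; exact E.compl_add a
    obtain ⟨f, hf, hxf⟩ := E.add_assoc x (E.compl d) a (E.compl a) E.one he h1'
    exact ⟨f, hf, (E.compl_eq hxf).symm⟩
  obtain ⟨f, hf, hbf⟩ := step b h1
  obtain ⟨g, hg, hcg⟩ := step c h2
  have hfg : f = g := Option.some.inj (hf.symm.trans hg)
  have hcc : E.compl b = E.compl c := by rw [hbf, hcg, hfg]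
  calc b = E.compl (E.compl b) := (E.compl_compl' b).symm
    _ = E.compl (E.compl c) := by rw [hcc]
    _ = c := E.compl_compl' c

end Basic

section Ordered

variable {α : Type u} [Lattice α] {E : EffectAlgebra α}
variable (hle : ∀ a b : α, a ≤ b ↔ E.le a b)

include hle

theorem le_intro {a b c : α} (h : E.add a c = some b) : a ≤ b :=
  (hle a b).mpr ⟨c, h⟩

theorem le_elim {a b : α} (h : a ≤ b) : ∃ c, E.add a c = some b := (hle a b).mp h

theorem le_intro' {a b c : α} (h : E.add c a = some b) : a ≤ b :=
  le_intro hle (by rw [E.add_comm]; exact h)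

theorem zero_le' (a : α) : E.zero ≤ a := le_intro' hle (E.add_zero' a)

theorem sub_add {a b : α} (h : a ≤ b) : E.add a (E.sub b a) = some b := by
  have h' : ∃ c, E.add a c = some b := le_elim hle h
  rw [EffectAlgebra.sub, dif_pos h']
  exact h'.choose_spec

theorem sub_eq {a b c : α} (h : E.add a c = some b) : E.sub b a = c :=
  E.cancel (sub_add hle (le_intro hle h)) h

theorem sub_zero' (b : α) : E.sub b E.zero = b :=
  sub_eq hle (by rw [E.add_comm]; exact E.add_zero' b)

theorem sub_self' (a : α) : E.sub a a = E.zero := sub_eq hle (E.add_zero' a)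

theorem le_compl_of_add {a b c : α} (h : E.add a b = some c) : a ≤ E.compl b := by
  have h' : E.add b a = some c := by rw [E.add_comm]; exact h
  obtain ⟨e, he, hbe⟩ := E.add_assoc b a (E.compl c) c E.one h' (E.compl_add c)
  have heq : e = E.compl b := E.compl_eq hbe
  exact le_intro hle (heq ▸ he)

theorem add_defined_of_le_compl {a b : α} (h : a ≤ E.compl b) :
    ∃ c, E.add a b = some c := by
  obtain ⟨x, hx⟩ := le_elim hle h
  have hx' : E.add x a = some (E.compl b) := by rw [E.add_comm]; exact hx
  have hb : E.add (E.compl b) b = some E.one := by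
    rw [E.add_comm]; exact E.compl_add b
  obtain ⟨e, he, _⟩ := E.add_assoc x a b (E.compl b) E.one hx' hb
  exact ⟨e, he⟩

theorem add_le_add_left' {c y s v : α} (h : y ≤ s) (hv : E.add c s = some v) :
    ∃ u, E.add c y = some u ∧ u ≤ v := by
  obtain ⟨r, hr⟩ := le_elim hle h
  obtain ⟨u, hu, hur⟩ := E.assoc_left hr hv
  exact ⟨u, hu, le_intro hle hur⟩

theorem le_of_add_le {c x y u v : α} (hx : E.add c x = some u)
    (hy : E.add c y = some v) (h : u ≤ v) : x ≤ y := by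
  obtain ⟨r, hr⟩ := le_elim hle h
  obtain ⟨z, hz, hcz⟩ := E.add_assoc c x r u v hx hr
  have hzy : z = y := E.cancel hcz hy
  exact le_intro hle (hzy ▸ hz)

theorem sub_le_sub_min {c x y : α} (hc : c ≤ x) (hxy : x ≤ y) :
    E.sub x c ≤ E.sub y c := by
  obtain ⟨r, hr⟩ := le_elim hle hxy
  have hx := sub_add hle hc
  obtain ⟨u, hu, hcu⟩ := E.add_assoc c (E.sub x c) r x y hx hr
  rw [show E.sub y c = u from sub_eq hle hcu]
  exact le_intro hle hu

theorem sub_le_sub_sub {x y z : α} (h1 : x ≤ y) (h2 : y ≤ z) :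
    E.sub z y ≤ E.sub z x := by
  have hx := sub_add hle h1
  have hy := sub_add hle h2
  obtain ⟨u, hu, hxu⟩ := E.add_assoc x (E.sub y x) (E.sub z y) y z hx hy
  rw [sub_eq hle hxu]
  exact le_intro' hle hu

theorem sub_inf {a b c : α} (hca : c ≤ a) (hcb : c ≤ b) :
    E.sub (a ⊓ b) c = E.sub a c ⊓ E.sub b c := by
  have hcab : c ≤ a ⊓ b := le_inf hca hcb
  apply le_antisymm
  · exact le_inf (sub_le_sub_min hle hcab inf_le_left)
      (sub_le_sub_min hle hcab inf_le_right)
  · obtain ⟨u, hu, hua⟩ := add_le_add_left' hle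
      (inf_le_left : E.sub a c ⊓ E.sub b c ≤ E.sub a c) (sub_add hle hca)
    obtain ⟨u', hu', hub⟩ := add_le_add_left' hle
      (inf_le_right : E.sub a c ⊓ E.sub b c ≤ E.sub b c) (sub_add hle hcb)
    have huu : u = u' := Option.some.inj (hu.symm.trans hu')
    exact le_of_add_le hle hu (sub_add hle hcab) (le_inf hua (huu ▸ hub))

end Ordered

end EffectAlgebra

open EffectAlgebra

/-- In a lattice ordered effect algebra, the four characterizations of
MV-effect algebras are equivalent. -/
theorem mvEffectAlgebra_tfae {α : Type u} [Lattice α] (E : EffectAlgebra α)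
    (hle : ∀ a b : α, a ≤ b ↔ E.le a b) :
    ((∀ a b : α, E.sub (a ⊔ b) a = E.sub b (a ⊓ b)) ↔
      (∀ a b : α, a ⊓ b = E.zero → E.le a (E.compl b))) ∧
    ((∀ a b : α, a ⊓ b = E.zero → E.le a (E.compl b)) ↔
      (∀ a b : α, E.le (E.sub a (a ⊓ b)) (E.compl b))) ∧
    ((∀ a b : α, E.le (E.sub a (a ⊓ b)) (E.compl b)) ↔
      (∀ a b : α, ∃ a₁ b₁ c s t : α, E.add a₁ b₁ = some s ∧ E.add s c = some t ∧
        E.add a₁ c = some a ∧ E.add b₁ c = some b)) := by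
  -- (A) → (B)
  have hAB : (∀ a b : α, E.sub (a ⊔ b) a = E.sub b (a ⊓ b)) →
      (∀ a b : α, a ⊓ b = E.zero → E.le a (E.compl b)) := by
    intro hA a b hab0
    have h2 := hA a b
    rw [hab0, sub_zero' hle] at h2
    have h3 : E.add a b = some (a ⊔ b) := by
      have h4 := sub_add hle (le_sup_left : a ≤ a ⊔ b)
      rwa [h2] at h4
    exact (hle _ _).mp (le_compl_of_add hle h3)
  -- (B) → (C)
  have hBC : (∀ a b : α, a ⊓ b = E.zero → E.le a (E.compl b)) →
      (∀ a b : α, E.le (E.sub a (a ⊓ b)) (E.compl b)) := by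
    intro hB a b
    have hda : a ⊓ b ≤ a := inf_le_left
    have hdb : a ⊓ b ≤ b := inf_le_right
    have hpq0 : E.sub a (a ⊓ b) ⊓ E.sub b (a ⊓ b) = E.zero := by
      have h := sub_inf hle hda hdb
      rw [sub_self' hle] at h
      exact h.symm
    obtain ⟨s, hs⟩ := add_defined_of_le_compl hle
      ((hle _ _).mpr (hB _ _ hpq0))
    have hps : E.sub a (a ⊓ b) ≤ s := le_intro hle hs
    have hqs : E.sub b (a ⊓ b) ≤ s := le_intro' hle hs
    have hpqs : E.sub a (a ⊓ b) ⊔ E.sub b (a ⊓ b) ≤ s := sup_le hps hqs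
    have hr_le_p : E.sub s (E.sub a (a ⊓ b) ⊔ E.sub b (a ⊓ b)) ≤ E.sub a (a ⊓ b) := by
      have h1 := sub_le_sub_sub hle
        (le_sup_right : E.sub b (a ⊓ b) ≤ E.sub a (a ⊓ b) ⊔ E.sub b (a ⊓ b)) hpqs
      have hs' : E.add (E.sub b (a ⊓ b)) (E.sub a (a ⊓ b)) = some s := by
        rw [E.add_comm]; exact hs
      rwa [sub_eq hle hs'] at h1
    have hr_le_q : E.sub s (E.sub a (a ⊓ b) ⊔ E.sub b (a ⊓ b)) ≤ E.sub b (a ⊓ b) := by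
      have h1 := sub_le_sub_sub hle
        (le_sup_left : E.sub a (a ⊓ b) ≤ E.sub a (a ⊓ b) ⊔ E.sub b (a ⊓ b)) hpqs
      rwa [sub_eq hle hs] at h1
    have hr0 : E.sub s (E.sub a (a ⊓ b) ⊔ E.sub b (a ⊓ b)) = E.zero :=
      le_antisymm (by rw [← hpq0]; exact le_inf hr_le_p hr_le_q) (zero_le' hle _)
    have hs_eq : E.sub a (a ⊓ b) ⊔ E.sub b (a ⊓ b) = s := by
      have h := sub_add hle hpqs
      rw [hr0, E.add_zero'] at h
      exact Option.some.inj h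
    have hpd : E.sub a (a ⊓ b) ≤ E.compl (a ⊓ b) :=
      le_compl_of_add hle (by rw [E.add_comm]; exact sub_add hle hda)
    have hqd : E.sub b (a ⊓ b) ≤ E.compl (a ⊓ b) :=
      le_compl_of_add hle (by rw [E.add_comm]; exact sub_add hle hdb)
    obtain ⟨u, hu⟩ := add_defined_of_le_compl hle (sup_le hpd hqd)
    rw [hs_eq] at hu
    obtain ⟨v, hv, hpv⟩ := E.add_assoc (E.sub a (a ⊓ b)) (E.sub b (a ⊓ b)) (a ⊓ b) s u hs hu
    have hvb : v = b := by
      have h2 : E.add (E.sub b (a ⊓ b)) (a ⊓ b) = some b := by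
        rw [E.add_comm]; exact sub_add hle hdb
      exact Option.some.inj (hv.symm.trans h2)
    rw [hvb] at hpv
    exact (hle _ _).mp (le_compl_of_add hle hpv)
  -- (C) → (D)
  have hCD : (∀ a b : α, E.le (E.sub a (a ⊓ b)) (E.compl b)) →
      (∀ a b : α, ∃ a₁ b₁ c s t : α, E.add a₁ b₁ = some s ∧ E.add s c = some t ∧
        E.add a₁ c = some a ∧ E.add b₁ c = some b) := by
    intro hC a b
    have hda : a ⊓ b ≤ a := inf_le_left
    have hdb : a ⊓ b ≤ b := inf_le_right
    have ha := sub_add hle hda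
    have hb := sub_add hle hdb
    obtain ⟨x, hx⟩ := add_defined_of_le_compl hle ((hle _ _).mpr (hC a b))
    have hb' : E.add (E.sub b (a ⊓ b)) (a ⊓ b) = some b := by
      rw [E.add_comm]; exact hb
    obtain ⟨s, hs1, hs2⟩ := E.assoc_left hb' hx
    exact ⟨E.sub a (a ⊓ b), E.sub b (a ⊓ b), a ⊓ b, s, x, hs1, hs2,
      by rw [E.add_comm]; exact ha, by rw [E.add_comm]; exact hb⟩
  -- (D) → (A)
  have hDA : (∀ a b : α, ∃ a₁ b₁ c s t : α, E.add a₁ b₁ = some s ∧ E.add s c = some t ∧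
        E.add a₁ c = some a ∧ E.add b₁ c = some b) →
      (∀ a b : α, E.sub (a ⊔ b) a = E.sub b (a ⊓ b)) := by
    intro hD a b
    obtain ⟨a₁, b₁, c, s, t, hs, hst, ha, hb⟩ := hD a b
    have hca : c ≤ a := le_intro' hle ha
    have hcb : c ≤ b := le_intro' hle hb
    have hcd : c ≤ a ⊓ b := le_inf hca hcb
    have hce : E.add c (E.sub (a ⊓ b) c) = some (a ⊓ b) := sub_add hle hcd
    have hca1 : E.add c a₁ = some a := by rw [E.add_comm]; exact ha
    have hcb1 : E.add c b₁ = some b := by rw [E.add_comm]; exact hb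
    have hea1 : E.sub (a ⊓ b) c ≤ a₁ := le_of_add_le hle hce hca1 inf_le_left
    have heb1 : E.sub (a ⊓ b) c ≤ b₁ := le_of_add_le hle hce hcb1 inf_le_right
    have he_eq : a₁ ⊓ b₁ = E.sub (a ⊓ b) c := by
      apply le_antisymm
      · obtain ⟨u, hu, hua⟩ := add_le_add_left' hle (inf_le_left : a₁ ⊓ b₁ ≤ a₁) hca1
        obtain ⟨u', hu', hub⟩ := add_le_add_left' hle (inf_le_right : a₁ ⊓ b₁ ≤ b₁) hcb1
        have huu : u = u' := Option.some.inj (hu.symm.trans hu')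
        exact le_of_add_le hle hu hce (le_inf hua (huu ▸ hub))
      · exact le_inf hea1 heb1
    have hdbd : E.add (a ⊓ b) (E.sub b (a ⊓ b)) = some b :=
      sub_add hle inf_le_right
    have hebd : E.add (E.sub (a ⊓ b) c) (E.sub b (a ⊓ b)) = some b₁ := by
      obtain ⟨z, hz, hcz⟩ := E.add_assoc c (E.sub (a ⊓ b) c) (E.sub b (a ⊓ b))
        (a ⊓ b) b hce hdbd
      rwa [E.cancel hcz hcb1] at hz
    have hbdb1 : E.sub b (a ⊓ b) ≤ b₁ := le_intro' hle hebd
    have hab1t : E.add a b₁ = some t := by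
      have hs' : E.add b₁ a₁ = some s := by rw [E.add_comm]; exact hs
      obtain ⟨z, hz, hbz⟩ := E.add_assoc b₁ a₁ c s t hs' hst
      have hza : z = a := Option.some.inj (hz.symm.trans ha)
      rw [hza] at hbz
      rw [E.add_comm]; exact hbz
    obtain ⟨m, hm, hmt⟩ := add_le_add_left' hle hbdb1 hab1t
    have ham : a ≤ m := le_intro hle hm
    have hbm : b ≤ m := by
      obtain ⟨u, hu, hum⟩ := add_le_add_left' hle (inf_le_left : a ⊓ b ≤ a)
        (by rw [E.add_comm]; exact hm)
      have hub : u = b := Option.some.inj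
        (hu.symm.trans (by rw [E.add_comm]; exact hdbd))
      exact hub ▸ hum
    have hwm : a ⊔ b ≤ m := sup_le ham hbm
    have heae : E.add (E.sub (a ⊓ b) c) (E.sub a₁ (E.sub (a ⊓ b) c)) = some a₁ :=
      sub_add hle hea1
    have haed : E.add (E.sub a₁ (E.sub (a ⊓ b) c)) (a ⊓ b) = some a := by
      have h1 : E.add (E.sub a₁ (E.sub (a ⊓ b) c)) (E.sub (a ⊓ b) c) = some a₁ := by
        rw [E.add_comm]; exact heae
      obtain ⟨ec, hec, haec⟩ := E.add_assoc (E.sub a₁ (E.sub (a ⊓ b) c))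
        (E.sub (a ⊓ b) c) c a₁ a h1 ha
      have hec' : ec = a ⊓ b := by
        have h2 : E.add (E.sub (a ⊓ b) c) c = some (a ⊓ b) := by
          rw [E.add_comm]; exact hce
        exact Option.some.inj (hec.symm.trans h2)
      rwa [hec'] at haec
    have hbae : E.add b (E.sub a₁ (E.sub (a ⊓ b) c)) = some m := by
      obtain ⟨z, hz, haez⟩ := E.add_assoc (E.sub a₁ (E.sub (a ⊓ b) c)) (a ⊓ b)
        (E.sub b (a ⊓ b)) a m haed hm
      have hzb : z = b := Option.some.inj (hz.symm.trans hdbd)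
      rw [hzb] at haez
      rw [E.add_comm]; exact haez
    have hsma : E.sub m a = E.sub b (a ⊓ b) := sub_eq hle hm
    have hsmb : E.sub m b = E.sub a₁ (E.sub (a ⊓ b) c) := sub_eq hle hbae
    have hsb1 : E.sub b₁ (E.sub (a ⊓ b) c) = E.sub b (a ⊓ b) := sub_eq hle hebd
    have hmw0 : E.sub m (a ⊔ b) = E.zero := by
      apply le_antisymm _ (zero_le' hle _)
      have h1 : E.sub m (a ⊔ b) ≤ E.sub b (a ⊓ b) :=
        hsma ▸ sub_le_sub_sub hle le_sup_left hwm
      have h2 : E.sub m (a ⊔ b) ≤ E.sub a₁ (E.sub (a ⊓ b) c) :=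
        hsmb ▸ sub_le_sub_sub hle le_sup_right hwm
      have h3 : E.sub (a₁ ⊓ b₁) (E.sub (a ⊓ b) c)
          = E.sub a₁ (E.sub (a ⊓ b) c) ⊓ E.sub b (a ⊓ b) := by
        rw [sub_inf hle hea1 heb1, hsb1]
      have h4 : E.sub (a₁ ⊓ b₁) (E.sub (a ⊓ b) c) = E.zero := by
        rw [he_eq, sub_self' hle]
      calc E.sub m (a ⊔ b) ≤ E.sub a₁ (E.sub (a ⊓ b) c) ⊓ E.sub b (a ⊓ b) :=
            le_inf h2 h1
        _ = E.zero := by rw [← h3, h4]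
    have hmeq : m = a ⊔ b := by
      have h := sub_add hle hwm
      rw [hmw0, E.add_zero'] at h
      exact (Option.some.inj h).symm
    rw [hmeq] at hm
    exact sub_eq hle hm
  exact ⟨⟨hAB, fun hB => hDA (hCD (hBC hB))⟩,
    ⟨hBC, fun hC => hAB (hDA (hCD hC))⟩,
    ⟨hCD, fun hD => hBC (hAB (hDA hD))⟩⟩
end

section
/- Let S be a set of pairwise commuting Hilbert space effects with I ∈ S. For finite U, V ⊆ S, define ⟨U|V⟩ = (∏U)·(⨆V), where ∏U is the product of the elements of U (∏∅ = I) and ⨆V is the iterated operation v₁ ⊔ ⋯ ⊔ vₙ with a ⊔ b = a + b − ab (⨆∅ = 0). Then ⟨·|·⟩ is a compatibility support mapping for S. -/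
open scoped Classical

variable {H : Type*} [NormedAddCommGroup H] [InnerProductSpace ℂ H] [CompleteSpace H]

/-- `a ⊔ b := a + b - ab`. -/
noncomputable def opSq (a b : H →L[ℂ] H) : H →L[ℂ] H := a + b - a * b

/-- `⟨U|V⟩ = (∏ U) · (⨆ V)`, with `∏∅ = 1` and `⨆∅ = 0`. -/
noncomputable def opCSM (U V : Finset (H →L[ℂ] H)) : H →L[ℂ] H :=
  U.toList.prod * (V.toList.foldr opSq 0)

/-!
Since `1 - a ⊔ b = (1 - a)(1 - b)`, we have `⨆ V = 1 - ∏_{v ∈ V} (1 - v)` and hence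
`⟨U|V⟩ = ∏ U · (1 - ∏_{v ∈ V} (1 - v))`. Everything in sight lies in the ring generated by `S`,
which is commutative, and a product of commuting effects is again an effect (a product of
commuting positive elements of a C⋆-algebra is positive). The differences in (a) and (b) factor
as `∏ U · ∏_{v ∈ V₁} (1 - v) · (1 - ∏_{v ∈ V₂ \ V₁} (1 - v))` and `∏ U · ∏_{v ∈ V} (1 - v)`,
and (e) is a ring identity once `c` is split off `∏ (insert c U)` and `1 - c` off
`∏_{v ∈ insert c V} (1 - v)`.
-/

open Set

theorem Subring.commute_of_mem_closure {R : Type*} [Ring R] {s : Set R}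
    (hcomm : ∀ a ∈ s, ∀ b ∈ s, a * b = b * a) {x y : R} (hx : x ∈ closure s)
    (hy : y ∈ closure s) : Commute x y :=
  Set.centralizer_centralizer_comm_of_comm hcomm x (closure_le_centralizer_centralizer s hx) y
    (closure_le_centralizer_centralizer s hy)

theorem Commute.one_sub_one_sub {R : Type*} [Ring R] {a b : R} (h : Commute a b) :
    Commute (1 - a) (1 - b) :=
  (Commute.one_left _).sub_left ((Commute.one_right a).sub_right h)

theorem one_sub_mem_Icc {R : Type*} [Ring R] [PartialOrder R] [IsOrderedAddMonoid R] {a : R}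
    (ha : a ∈ Icc 0 1) : 1 - a ∈ Icc 0 1 :=
  ⟨sub_nonneg.2 ha.2, sub_le_self 1 ha.1⟩

section Monoid

variable {ι M : Type*} [Monoid M] {f : ι → M}

theorem Finset.pairwise_commute_map_toList {s : Finset ι}
    (hf : ∀ x ∈ s, ∀ y ∈ s, Commute (f x) (f y)) : (s.toList.map f).Pairwise Commute :=
  List.pairwise_map.2 <| List.pairwise_of_forall_mem_list fun x hx y hy =>
    hf x (mem_toList.1 hx) y (mem_toList.1 hy)

theorem Finset.prod_map_toList_insert [DecidableEq ι] {s : Finset ι} {a : ι} (ha : a ∉ s)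
    (hf : ∀ x ∈ insert a s, ∀ y ∈ insert a s, Commute (f x) (f y)) :
    ((insert a s).toList.map f).prod = f a * (s.toList.map f).prod := by
  rw [((toList_insert ha).map f).prod_eq' (pairwise_commute_map_toList hf), List.map_cons,
    List.prod_cons]

theorem Finset.prod_toList_insert [DecidableEq M] {s : Finset M} {a : M} (ha : a ∉ s)
    (hs : ∀ x ∈ insert a s, ∀ y ∈ insert a s, Commute x y) :
    (insert a s).toList.prod = a * s.toList.prod := by
  simpa using prod_map_toList_insert (f := id) ha hs

theorem Finset.toList_perm_append_sdiff [DecidableEq ι] {s t : Finset ι} (h : s ⊆ t) :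
    t.toList.Perm (s.toList ++ (t \ s).toList) := by
  rw [← Multiset.coe_eq_coe, coe_toList, ← Multiset.coe_add, coe_toList, coe_toList, sdiff_val]
  exact (add_tsub_cancel_of_le (val_le_iff.2 h)).symm

theorem Finset.prod_map_toList_eq_mul_sdiff [DecidableEq ι] {s t : Finset ι} (h : s ⊆ t)
    (hf : ∀ x ∈ t, ∀ y ∈ t, Commute (f x) (f y)) :
    (t.toList.map f).prod = (s.toList.map f).prod * ((t \ s).toList.map f).prod := by
  rw [((toList_perm_append_sdiff h).map f).prod_eq' (pairwise_commute_map_toList hf),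
    List.map_append, List.prod_append]

end Monoid

section Ring

variable {R : Type*} [Ring R]

noncomputable def oneSubProd (V : Finset R) : R :=
  (V.toList.map (1 - ·)).prod

theorem oneSubProd_singleton (a : R) : oneSubProd {a} = 1 - a := by
  simp [oneSubProd]

theorem oneSubProd_insert [DecidableEq R] {V : Finset R} {a : R} (ha : a ∉ V)
    (hV : ∀ x ∈ insert a V, ∀ y ∈ insert a V, Commute x y) :
    oneSubProd (insert a V) = (1 - a) * oneSubProd V :=
  Finset.prod_map_toList_insert ha fun x hx y hy => (hV x hx y hy).one_sub_one_sub

theorem oneSubProd_eq_mul_sdiff [DecidableEq R] {V W : Finset R} (h : V ⊆ W)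
    (hW : ∀ x ∈ W, ∀ y ∈ W, Commute x y) :
    oneSubProd W = oneSubProd V * oneSubProd (W \ V) :=
  Finset.prod_map_toList_eq_mul_sdiff h fun x hx y hy => (hW x hx y hy).one_sub_one_sub

theorem Finset.prod_toList_mem_closure {s : Set R} {U : Finset R} (hU : ↑U ⊆ s) :
    U.toList.prod ∈ Subring.closure s :=
  list_prod_mem fun _ hx => Subring.subset_closure (hU (mem_toList.1 hx))

theorem oneSubProd_mem_closure {s : Set R} {V : Finset R} (hV : ↑V ⊆ s) :
    oneSubProd V ∈ Subring.closure s := by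
  refine list_prod_mem fun x hx => ?_
  obtain ⟨v, hv, rfl⟩ := List.mem_map.1 hx
  exact sub_mem (one_mem _) (Subring.subset_closure (hV (Finset.mem_toList.1 hv)))

end Ring

section CStarAlgebra

variable {A : Type*} [CStarAlgebra A] [PartialOrder A] [StarOrderedRing A]

theorem Commute.mul_mem_Icc {a b : A} (h : Commute a b) (ha : a ∈ Icc 0 1) (hb : b ∈ Icc 0 1) :
    a * b ∈ Icc 0 1 := by
  have hab : 0 ≤ a * (1 - b) :=
    ((Commute.one_right a).sub_right h).mul_nonneg ha.1 (sub_nonneg.2 hb.2)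
  rw [mul_sub, mul_one, sub_nonneg] at hab
  exact ⟨h.mul_nonneg ha.1 hb.1, hab.trans ha.2⟩

theorem List.prod_mem_Icc_of_pairwise_commute {l : List A} (hl : ∀ x ∈ l, x ∈ Icc 0 1)
    (hc : l.Pairwise Commute) : l.prod ∈ Icc 0 1 := by
  induction l with
  | nil => exact ⟨zero_le_one, le_rfl⟩
  | cons a l ih =>
    rw [List.pairwise_cons] at hc
    rw [List.prod_cons]
    exact (Commute.list_prod_right _ _ hc.1).mul_mem_Icc (hl a mem_cons_self)
      (ih (fun x hx => hl x (mem_cons_of_mem a hx)) hc.2)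

theorem Finset.prod_toList_mem_Icc {S : Set A} (hS : ∀ a ∈ S, a ∈ Set.Icc 0 1)
    (hcomm : ∀ a ∈ S, ∀ b ∈ S, a * b = b * a) {U : Finset A} (hU : ↑U ⊆ S) :
    U.toList.prod ∈ Set.Icc 0 1 :=
  List.prod_mem_Icc_of_pairwise_commute (fun x hx => hS x (hU (mem_toList.1 hx)))
    (List.pairwise_of_forall_mem_list fun x hx y hy =>
      hcomm x (hU (mem_toList.1 hx)) y (hU (mem_toList.1 hy)))

theorem oneSubProd_mem_Icc {S : Set A} (hS : ∀ a ∈ S, a ∈ Icc 0 1)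
    (hcomm : ∀ a ∈ S, ∀ b ∈ S, a * b = b * a) {V : Finset A} (hV : ↑V ⊆ S) :
    oneSubProd V ∈ Icc 0 1 := by
  refine List.prod_mem_Icc_of_pairwise_commute (fun x hx => ?_)
    (Finset.pairwise_commute_map_toList fun x hx y hy =>
      Commute.one_sub_one_sub (hcomm x (hV hx) y (hV hy)))
  obtain ⟨v, hv, rfl⟩ := List.mem_map.1 hx
  exact one_sub_mem_Icc (hS v (hV (Finset.mem_toList.1 hv)))

end CStarAlgebra
section InnerProductSpace

variable {E : Type*} [NormedAddCommGroup E] [InnerProductSpace ℂ E]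

theorem foldr_opSq_eq_one_sub_prod (l : List (E →L[ℂ] E)) :
    l.foldr opSq 0 = 1 - (l.map (1 - ·)).prod := by
  induction l with
  | nil => simp
  | cons a l ih =>
    rw [List.foldr_cons, ih, List.map_cons, List.prod_cons, opSq]
    noncomm_ring

theorem opCSM_eq_mul_one_sub_oneSubProd (U V : Finset (E →L[ℂ] E)) :
    opCSM U V = U.toList.prod * (1 - oneSubProd V) := by
  rw [opCSM, foldr_opSq_eq_one_sub_prod, oneSubProd]

theorem opCSM_empty_right (U : Finset (E →L[ℂ] E)) : opCSM U ∅ = 0 := by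
  simp [opCSM]

theorem opCSM_empty_singleton (c : E →L[ℂ] E) : opCSM ∅ {c} = c := by
  simp [opCSM, opSq]

theorem opCSM_insert_left_sub_eq_opCSM_insert_right_sub {S : Set (E →L[ℂ] E)}
    (hcomm : ∀ a ∈ S, ∀ b ∈ S, a * b = b * a) {U V : Finset (E →L[ℂ] E)} {c : E →L[ℂ] E}
    (hU : ↑U ⊆ S) (hV : ↑V ⊆ S) (hc : c ∈ S) (hcU : c ∉ U) (hcV : c ∉ V) :
    opCSM (insert c U) {1} - opCSM (insert c U) V = opCSM U (insert c V) - opCSM U V := by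
  have hcommOn {W : Finset (E →L[ℂ] E)} (hW : ↑W ⊆ S) : ∀ x ∈ W, ∀ y ∈ W, Commute x y :=
    fun x hx y hy => hcomm x (hW hx) y (hW hy)
  have hcP : Commute c U.toList.prod :=
    Subring.commute_of_mem_closure hcomm (Subring.subset_closure hc)
      (Finset.prod_toList_mem_closure hU)
  simp only [opCSM_eq_mul_one_sub_oneSubProd]
  rw [Finset.prod_toList_insert hcU (hcommOn (by simpa using insert_subset hc hU)),
    oneSubProd_insert hcV (hcommOn (by simpa using insert_subset hc hV)),
    oneSubProd_singleton, sub_self, hcP.eq]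
  noncomm_ring

end InnerProductSpace

section Effects

variable {S : Set (H →L[ℂ] H)}

theorem opCSM_mono_right (hS : ∀ a ∈ S, a ∈ Icc 0 1) (hcomm : ∀ a ∈ S, ∀ b ∈ S, a * b = b * a)
    {U V₁ V₂ : Finset (H →L[ℂ] H)} (hU : ↑U ⊆ S) (hV₂ : ↑V₂ ⊆ S) (h : V₁ ⊆ V₂) :
    opCSM U V₁ ≤ opCSM U V₂ := by
  have hV₁ : ↑V₁ ⊆ S := (Finset.coe_subset.2 h).trans hV₂
  have hD : ↑(V₂ \ V₁) ⊆ S := (Finset.coe_subset.2 Finset.sdiff_subset).trans hV₂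
  have hdiff : opCSM U V₂ - opCSM U V₁ =
      U.toList.prod * (oneSubProd V₁ * (1 - oneSubProd (V₂ \ V₁))) := by
    rw [opCSM_eq_mul_one_sub_oneSubProd, opCSM_eq_mul_one_sub_oneSubProd,
      oneSubProd_eq_mul_sdiff h fun x hx y hy => hcomm x (hV₂ hx) y (hV₂ hy)]
    noncomm_ring
  have hQc := oneSubProd_mem_closure hV₁
  have hQDc := sub_mem (one_mem _) (oneSubProd_mem_closure hD)
  rw [← sub_nonneg, hdiff]
  exact (Subring.commute_of_mem_closure hcomm (Finset.prod_toList_mem_closure hU)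
      (mul_mem hQc hQDc)).mul_nonneg (Finset.prod_toList_mem_Icc hS hcomm hU).1
    ((Subring.commute_of_mem_closure hcomm hQc hQDc).mul_nonneg
      (oneSubProd_mem_Icc hS hcomm hV₁).1 (sub_nonneg.2 (oneSubProd_mem_Icc hS hcomm hD).2))

theorem opCSM_le_opCSM_singleton_one (hS : ∀ a ∈ S, a ∈ Icc 0 1)
    (hcomm : ∀ a ∈ S, ∀ b ∈ S, a * b = b * a) {U V : Finset (H →L[ℂ] H)} (hU : ↑U ⊆ S)
    (hV : ↑V ⊆ S) : opCSM U V ≤ opCSM U {1} := by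
  have hdiff : opCSM U {1} - opCSM U V = U.toList.prod * oneSubProd V := by
    rw [opCSM_eq_mul_one_sub_oneSubProd, opCSM_eq_mul_one_sub_oneSubProd, oneSubProd_singleton,
      sub_self]
    noncomm_ring
  rw [← sub_nonneg, hdiff]
  exact (Subring.commute_of_mem_closure hcomm (Finset.prod_toList_mem_closure hU)
      (oneSubProd_mem_closure hV)).mul_nonneg (Finset.prod_toList_mem_Icc hS hcomm hU).1
    (oneSubProd_mem_Icc hS hcomm hV).1

end Effects

theorem opCSM_isCSM_general (S : Set (H →L[ℂ] H))
    (hS : ∀ a ∈ S, a.IsPositive ∧ ((1 : H →L[ℂ] H) - a).IsPositive)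
    (hcomm : ∀ a ∈ S, ∀ b ∈ S, a * b = b * a) :
    (∀ U V₁ V₂ : Finset (H →L[ℂ] H), ↑U ⊆ S → ↑V₁ ⊆ S → ↑V₂ ⊆ S → V₁ ⊆ V₂ →
      (opCSM U V₂ - opCSM U V₁).IsPositive) ∧
    (∀ U V : Finset (H →L[ℂ] H), ↑U ⊆ S → ↑V ⊆ S →
      (opCSM U {1} - opCSM U V).IsPositive) ∧
    (∀ U : Finset (H →L[ℂ] H), ↑U ⊆ S → opCSM U ∅ = 0) ∧
    (∀ c ∈ S, opCSM ∅ {c} = c) ∧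
    (∀ (U V : Finset (H →L[ℂ] H)) (c : H →L[ℂ] H), ↑U ⊆ S → ↑V ⊆ S → c ∈ S →
      c ∉ U → c ∉ V →
      opCSM (insert c U) {1} - opCSM (insert c U) V =
        opCSM U (insert c V) - opCSM U V) := by
  have hEff : ∀ a ∈ S, a ∈ Icc 0 1 := fun a ha =>
    ⟨(ContinuousLinearMap.nonneg_iff_isPositive a).2 (hS a ha).1,
      (ContinuousLinearMap.le_def a 1).2 (hS a ha).2⟩
  exact ⟨fun _ _ _ hU _ hV₂ h => opCSM_mono_right hEff hcomm hU hV₂ h,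
    fun _ _ hU hV => opCSM_le_opCSM_singleton_one hEff hcomm hU hV,
    fun U _ => opCSM_empty_right U,
    fun c _ => opCSM_empty_singleton c,
    fun _ _ _ hU hV hc hcU hcV => opCSM_insert_left_sub_eq_opCSM_insert_right_sub hcomm hU hV hc hcU hcV⟩

/-- For a set `S` of pairwise commuting Hilbert space effects with `1 ∈ S`,
`⟨U|V⟩ = (∏U)·(⨆V)` is a compatibility support mapping for `S` (in the effect
algebra of Hilbert space effects, where `x ≤ y` iff `y - x` is positive and
`⊖` is operator subtraction). -/
theorem opCSM_isCSM (S : Set (H →L[ℂ] H))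
    (hS : ∀ a ∈ S, a.IsPositive ∧ ((1 : H →L[ℂ] H) - a).IsPositive)
    (hcomm : ∀ a ∈ S, ∀ b ∈ S, a * b = b * a)
    (h1 : (1 : H →L[ℂ] H) ∈ S) :
    (∀ U V₁ V₂ : Finset (H →L[ℂ] H), ↑U ⊆ S → ↑V₁ ⊆ S → ↑V₂ ⊆ S → V₁ ⊆ V₂ →
      (opCSM U V₂ - opCSM U V₁).IsPositive) ∧
    (∀ U V : Finset (H →L[ℂ] H), ↑U ⊆ S → ↑V ⊆ S →
      (opCSM U {1} - opCSM U V).IsPositive) ∧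
    (∀ U : Finset (H →L[ℂ] H), ↑U ⊆ S → opCSM U ∅ = 0) ∧
    (∀ c ∈ S, opCSM ∅ {c} = c) ∧
    (∀ (U V : Finset (H →L[ℂ] H)) (c : H →L[ℂ] H), ↑U ⊆ S → ↑V ⊆ S → c ∈ S →
      c ∉ U → c ∉ V →
      opCSM (insert c U) {1} - opCSM (insert c U) V =
        opCSM U (insert c V) - opCSM U V) :=
  opCSM_isCSM_general S hS hcomm
end

section
/- Let ⟨·|·⟩ be a compatibility support mapping for S and D(X,A) = ⟨X|{1}⟩ ⊖ ⟨X|A∖X⟩. Let C, A, X be finite subsets of S with X ⊆ A and C ∩ A = ∅. Then the family (D(X∪Y, A∪C))_{Y⊆C} is orthogonal (its sum is defined in E) and ⊕_{Y⊆C} D(X∪Y, A∪C) = D(X,A). -/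
universe u

namespace EffectAlgebra

variable {α : Type u}

/-- `f` is a compatibility support mapping for `S` (with `1 ∈ S`). -/
def IsCSM [DecidableEq α] (E : EffectAlgebra α) (S : Set α) (f : Finset α → Finset α → α) : Prop :=
  E.one ∈ S ∧
  (∀ U V₁ V₂ : Finset α, ↑U ⊆ S → ↑V₁ ⊆ S → ↑V₂ ⊆ S → V₁ ⊆ V₂ →
    E.le (f U V₁) (f U V₂)) ∧
  (∀ U V : Finset α, ↑U ⊆ S → ↑V ⊆ S → E.le (f U V) (f U {E.one})) ∧
  (∀ U : Finset α, ↑U ⊆ S → f U ∅ = E.zero) ∧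
  (∀ c ∈ S, f ∅ {c} = c) ∧
  (∀ (U V : Finset α) (c : α), ↑U ⊆ S → ↑V ⊆ S → c ∈ S → c ∉ U → c ∉ V →
    E.sub (f (insert c U) {E.one}) (f (insert c U) V) =
      E.sub (f U (insert c V)) (f U V))

/-- `f` is a strong compatibility support mapping for `S`:
condition (e*) holds with no restriction on `c`. -/
def IsStrongCSM [DecidableEq α] (E : EffectAlgebra α) (S : Set α) (f : Finset α → Finset α → α) : Prop :=
  E.one ∈ S ∧
  (∀ U V₁ V₂ : Finset α, ↑U ⊆ S → ↑V₁ ⊆ S → ↑V₂ ⊆ S → V₁ ⊆ V₂ →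
    E.le (f U V₁) (f U V₂)) ∧
  (∀ U V : Finset α, ↑U ⊆ S → ↑V ⊆ S → E.le (f U V) (f U {E.one})) ∧
  (∀ U : Finset α, ↑U ⊆ S → f U ∅ = E.zero) ∧
  (∀ c ∈ S, f ∅ {c} = c) ∧
  (∀ (U V : Finset α) (c : α), ↑U ⊆ S → ↑V ⊆ S → c ∈ S →
    E.sub (f (insert c U) {E.one}) (f (insert c U) V) =
      E.sub (f U (insert c V)) (f U V))

/-- `D(X,A) = ⟨X|{1}⟩ ⊖ ⟨X|A∖X⟩`. -/
noncomputable def Dmap [DecidableEq α] (E : EffectAlgebra α)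
    (f : Finset α → Finset α → α) (X A : Finset α) : α :=
  E.sub (f X {E.one}) (f X (A \ X))

end EffectAlgebra


namespace EffectAlgebra

variable {α : Type u}

lemma add_one_zero (E : EffectAlgebra α) : E.add E.one E.zero = some E.one := by
  obtain ⟨x, hx, -⟩ := E.orthosupp E.one
  have hx' : x = E.zero := E.add_one x E.one (by rw [E.add_comm x E.one]; exact hx)
  rw [← hx']; exact hx

lemma add_zero_right (E : EffectAlgebra α) (b : α) : E.add b E.zero = some b := by
  obtain ⟨b', hb', -⟩ := E.orthosupp b
  have hb'b : E.add b' b = some E.one := by rw [E.add_comm]; exact hb'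
  obtain ⟨d, hd, hbd⟩ := E.add_assoc b' b E.zero E.one E.one hb'b (E.add_one_zero)
  obtain ⟨w, hw, huniq⟩ := E.orthosupp b'
  have hdb : d = b := by rw [huniq d hbd, huniq b hb'b]
  rw [hdb] at hd; exact hd

lemma add_cancel (E : EffectAlgebra α) {a b b' c : α}
    (h1 : E.add a b = some c) (h2 : E.add a b' = some c) : b = b' := by
  obtain ⟨c', hc', -⟩ := E.orthosupp c
  have key : ∀ x : α, E.add a x = some c →
      ∃ e, E.add c' a = some e ∧ E.add e x = some E.one := by
    intro x hx
    obtain ⟨d, hd, had⟩ := E.add_assoc a x c' c E.one hx hc'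
    have hda : E.add d a = some E.one := by rw [E.add_comm]; exact had
    obtain ⟨e, he, hxe⟩ := E.add_assoc x c' a d E.one hd hda
    exact ⟨e, he, by rw [E.add_comm]; exact hxe⟩
  obtain ⟨e, he, heb⟩ := key b h1
  obtain ⟨e', he', heb'⟩ := key b' h2
  have hee : e = e' := Option.some.inj (he.symm.trans he')
  obtain ⟨w, hw, huniq⟩ := E.orthosupp e
  rw [huniq b heb, huniq b' (by rw [hee]; exact heb')]

lemma sub_spec (E : EffectAlgebra α) {a c b : α} (h : E.add a c = some b) :
    E.sub b a = c := by
  have hex : ∃ x, E.add a x = some b := ⟨c, h⟩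
  rw [EffectAlgebra.sub, dif_pos hex]
  exact E.add_cancel hex.choose_spec h

lemma sub_add_sub (E : EffectAlgebra α) {b m t : α}
    (hbm : E.le b m) (hmt : E.le m t) :
    E.add (E.sub t m) (E.sub m b) = some (E.sub t b) := by
  obtain ⟨p, hp⟩ := hbm
  obtain ⟨q, hq⟩ := hmt
  obtain ⟨r, hr, hbr⟩ := E.add_assoc b p q m t hp hq
  rw [E.sub_spec hp, E.sub_spec hq, E.sub_spec hbr, E.add_comm]
  exact hr

/-- Totalised partial addition on `Option α`. -/
noncomputable def optMul (E : EffectAlgebra α) (x y : Option α) : Option α :=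
  x.bind fun a => y.bind fun b => E.add a b

lemma optMul_some_some (E : EffectAlgebra α) (a b : α) :
    E.optMul (some a) (some b) = E.add a b := rfl

lemma optMul_none_left (E : EffectAlgebra α) (y : Option α) :
    E.optMul none y = none := rfl

lemma optMul_none_right (E : EffectAlgebra α) (x : Option α) :
    E.optMul x none = none := by cases x <;> rfl

lemma optMul_comm (E : EffectAlgebra α) (x y : Option α) :
    E.optMul x y = E.optMul y x := by
  cases x <;> cases y <;> simp [optMul, E.add_comm]

lemma optMul_one_right (E : EffectAlgebra α) (x : Option α) :
    E.optMul x (some E.zero) = x := by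
  cases x <;> simp [optMul, E.add_zero_right]

lemma optMul_assoc (E : EffectAlgebra α) (x y z : Option α) :
    E.optMul (E.optMul x y) z = E.optMul x (E.optMul y z) := by
  have fwd : ∀ a b c s : α, E.optMul (E.optMul (some a) (some b)) (some c) = some s →
      E.optMul (some a) (E.optMul (some b) (some c)) = some s := by
    intro a b c s h
    rw [E.optMul_some_some a b] at h
    rcases hab : E.add a b with _ | ab
    · rw [hab, E.optMul_none_left] at h; exact absurd h (by simp)
    · rw [hab, E.optMul_some_some] at h
      obtain ⟨bc, hbc, habc⟩ := E.add_assoc a b c ab s hab h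
      rw [E.optMul_some_some b c, hbc, E.optMul_some_some]
      exact habc
  have bwd : ∀ a b c s : α, E.optMul (some a) (E.optMul (some b) (some c)) = some s →
      E.optMul (E.optMul (some a) (some b)) (some c) = some s := by
    intro a b c s h
    rw [E.optMul_some_some b c] at h
    rcases hbc : E.add b c with _ | bc
    · rw [hbc, E.optMul_none_right] at h; exact absurd h (by simp)
    · rw [hbc, E.optMul_some_some] at h
      have h1 : E.add bc a = some s := by rw [E.add_comm]; exact h
      obtain ⟨ca, hca, hbca⟩ := E.add_assoc b c a bc s hbc h1
      have h2 : E.add ca b = some s := by rw [E.add_comm]; exact hbca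
      obtain ⟨ab, hab, hcab⟩ := E.add_assoc c a b ca s hca h2
      rw [E.optMul_some_some a b, hab, E.optMul_some_some, E.add_comm]
      exact hcab
  cases x with
  | none => simp [optMul_none_left]
  | some a =>
    cases y with
    | none => simp [E.optMul_none_right, E.optMul_none_left]
    | some b =>
      cases z with
      | none => simp [E.optMul_none_right, E.optMul_none_left]
      | some c =>
        rcases h1 : E.optMul (E.optMul (some a) (some b)) (some c) with _ | s
        · rcases h2 : E.optMul (some a) (E.optMul (some b) (some c)) with _ | s'
          · rfl
          · exact absurd ((bwd a b c s' h2).symm.trans h1) (by simp)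
        · exact (fwd a b c s h1).symm

/-- `Option α` with totalised addition is a commutative monoid. -/
noncomputable def optMonoid (E : EffectAlgebra α) : CommMonoid (Option α) where
  mul := E.optMul
  one := some E.zero
  mul_assoc := E.optMul_assoc
  one_mul x := by
    show E.optMul (some E.zero) x = x
    rw [E.optMul_comm]; exact E.optMul_one_right x
  mul_one x := E.optMul_one_right x
  mul_comm := E.optMul_comm

lemma osum_eq_foldr (E : EffectAlgebra α) (l : List α) :
    E.osum l = (l.map some).foldr E.optMul (some E.zero) := by
  induction l with
  | nil => rfl
  | cons a l ih =>
    simp only [osum, ih, List.map_cons, List.foldr_cons]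
    rfl

/-- The key pairing identity: `D(X, A∪{c}) ⊕ D(X∪{c}, A∪{c}) = D(X,A)`. -/
lemma Dmap_insert_add [DecidableEq α] (E : EffectAlgebra α)
    {S : Set α} {f : Finset α → Finset α → α} (hf : E.IsCSM S f)
    {X A : Finset α} (hA : ↑A ⊆ S) (hXA : X ⊆ A) {c : α} (hcS : c ∈ S) (hcA : c ∉ A) :
    E.add (E.Dmap f X (insert c A)) (E.Dmap f (insert c X) (insert c A)) =
      some (E.Dmap f X A) := by
  obtain ⟨h1S, hmono, hle1, hzero, hsingle, hstar⟩ := hf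
  have hXS : ↑X ⊆ S := fun x hx => hA (hXA hx)
  have hVS : ↑(A \ X) ⊆ S := fun x hx => hA (by
    simpa using (Finset.mem_sdiff.mp (by exact_mod_cast hx)).1)
  have hcX : c ∉ X := fun h => hcA (hXA h)
  have hcV : c ∉ A \ X := fun h => hcA (Finset.mem_sdiff.mp h).1
  have e1 : insert c A \ X = insert c (A \ X) := by
    ext d
    simp only [Finset.mem_sdiff, Finset.mem_insert]
    constructor
    · rintro ⟨(rfl | hd), hdX⟩
      · exact Or.inl rfl
      · exact Or.inr ⟨hd, hdX⟩
    · rintro (rfl | ⟨hd, hdX⟩)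
      · exact ⟨Or.inl rfl, hcX⟩
      · exact ⟨Or.inr hd, hdX⟩
  have e2 : insert c A \ insert c X = A \ X := by
    ext d
    simp only [Finset.mem_sdiff, Finset.mem_insert, not_or]
    constructor
    · rintro ⟨(rfl | hd), hne, hdX⟩
      · exact absurd rfl hne
      · exact ⟨hd, hdX⟩
    · rintro ⟨hd, hdX⟩
      exact ⟨Or.inr hd, fun h => hcA (h ▸ hd), hdX⟩
  have hstar' := hstar X (A \ X) c hXS hVS hcS hcX hcV
  unfold Dmap
  rw [e1, e2, hstar']
  have hVS' : ↑(insert c (A \ X)) ⊆ S := by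
    intro x hx
    rcases Finset.mem_insert.mp (by exact_mod_cast hx) with rfl | h
    · exact hcS
    · exact hVS h
  have hbm : E.le (f X (A \ X)) (f X (insert c (A \ X))) :=
    hmono X (A \ X) (insert c (A \ X)) hXS hVS hVS' (Finset.subset_insert _ _)
  have hmt : E.le (f X (insert c (A \ X))) (f X {E.one}) :=
    hle1 X (insert c (A \ X)) hXS hVS'
  exact E.sub_add_sub hbm hmt

end EffectAlgebra

/-- The key sum over the powerset, in `Finset.prod` form. -/
theorem csm_D_prod_powerset {α : Type u} [DecidableEq α] (E : EffectAlgebra α)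
    (S : Set α) (f : Finset α → Finset α → α) (hf : E.IsCSM S f) :
    ∀ (C A X : Finset α), ↑A ⊆ S → ↑C ⊆ S → X ⊆ A → Disjoint C A →
    @Finset.prod (Finset α) (Option α) E.optMonoid C.powerset
        (fun Y => some (E.Dmap f (X ∪ Y) (A ∪ C))) =
      some (E.Dmap f X A) := by
  letI := E.optMonoid
  intro C
  induction C using Finset.induction with
  | empty =>
    intro A X hA _ hXA _
    simp
  | @insert c C hcC ih =>
    intro A X hA hC hXA hCA
    have hcS : c ∈ S := hC (by simp)
    have hCS : ↑C ⊆ S := fun x hx => hC (by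
      simp only [Finset.coe_insert, Set.mem_insert_iff]
      exact Or.inr hx)
    have hcA : c ∉ A := fun h =>
      (Finset.disjoint_left.mp hCA (Finset.mem_insert_self c C)) h
    have hCA' : Disjoint C (insert c A) := by
      rw [Finset.disjoint_insert_right]
      exact ⟨hcC, (Finset.disjoint_insert_left.mp hCA).2⟩
    have hA' : ↑(insert c A) ⊆ S := by
      intro x hx
      rcases Finset.mem_insert.mp (by exact_mod_cast hx) with rfl | h
      · exact hcS
      · exact hA h
    have hunion : A ∪ insert c C = insert c A ∪ C := by
      ext d; simp only [Finset.mem_union, Finset.mem_insert]; tauto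
    rw [Finset.prod_powerset_insert hcC]
    have ih1 := ih (insert c A) X hA' hCS
      (hXA.trans (Finset.subset_insert _ _)) hCA'
    have ih2 := ih (insert c A) (insert c X) hA' hCS
      (Finset.insert_subset_insert _ hXA) hCA'
    have step1 : (∏ Y ∈ C.powerset,
        some (E.Dmap f (X ∪ Y) (A ∪ insert c C))) = some (E.Dmap f X (insert c A)) := by
      rw [← ih1]
      refine Finset.prod_congr rfl fun Y _ => ?_
      rw [hunion]
    have step2 : (∏ Y ∈ C.powerset,
        some (E.Dmap f (X ∪ insert c Y) (A ∪ insert c C))) =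
        some (E.Dmap f (insert c X) (insert c A)) := by
      rw [← ih2]
      refine Finset.prod_congr rfl fun Y _ => ?_
      rw [hunion, Finset.union_insert]
      have hins : insert c X ∪ Y = insert c (X ∪ Y) := Finset.insert_union c X Y
      rw [hins]
    rw [step1, step2]
    show E.optMul _ _ = _
    simp only [EffectAlgebra.optMul, Option.bind_some]
    exact E.Dmap_insert_add hf hA hXA hcS hcA

/-- For `X ⊆ A` and `C` disjoint from `A`, the family `(D(X∪Y, A∪C))_{Y⊆C}`
is orthogonal and its sum equals `D(X,A)`. -/
theorem csm_D_sum_powerset {α : Type u} [DecidableEq α] (E : EffectAlgebra α)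
    (S : Set α) (f : Finset α → Finset α → α) (hf : E.IsCSM S f)
    (C A X : Finset α) (hA : ↑A ⊆ S) (hC : ↑C ⊆ S)
    (hXA : X ⊆ A) (hCA : Disjoint C A) :
    E.osum (C.powerset.toList.map (fun Y => E.Dmap f (X ∪ Y) (A ∪ C))) =
      some (E.Dmap f X A) := by
  letI := E.optMonoid
  have h1 : E.osum (C.powerset.toList.map (fun Y => E.Dmap f (X ∪ Y) (A ∪ C))) =
      (C.powerset.toList.map (fun Y => some (E.Dmap f (X ∪ Y) (A ∪ C)))).prod := by
    rw [E.osum_eq_foldr, List.map_map]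
    rw [List.prod_eq_foldr]
    rfl
  rw [h1, Finset.prod_map_toList]
  exact csm_D_prod_powerset E S f hf C A X hA hC hXA hCA
end

section
/- Let ⟨·|·⟩ be a strong compatibility support mapping for S. Then for every finite V ⊆ S, ⟨∅|V⟩ is an upper bound of V (i.e., v ≤ ⟨∅|V⟩ for all v ∈ V). -/
universe u

/-- For a strong compatibility support mapping, `⟨∅|V⟩` is an upper bound
of `V`. -/
theorem strongCSM_upperBound {α : Type u} [DecidableEq α] (E : EffectAlgebra α)
    (S : Set α) (f : Finset α → Finset α → α) (hf : E.IsStrongCSM S f)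
    (V : Finset α) (hV : ↑V ⊆ S) :
    ∀ v ∈ V, E.le v (f ∅ V) := by
  intro v hv
  obtain ⟨h1, hmono, hc, hzero, hsingle, he⟩ := hf
  have hvS : v ∈ S := hV hv
  have := hmono ∅ {v} V (by simp) (by simpa using hvS) hV (by simpa using hv)
  rwa [hsingle v hvS] at this
end

section
/- Let E be an interval effect algebra, S ⊆ E with 1 ∈ S, and ⟨·|·⟩ a compatibility support mapping for S. Then β : Fin(S) → E defined by β(X) = ⟨X|{1}⟩ is a witness mapping for S, and D(X,A) = D_β(X,A) for all finite X ⊆ A ⊆ S, where D(X,A) = ⟨X|{1}⟩ ⊖ ⟨X|A∖X⟩. -/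
private lemma csm_key {G : Type*} [AddCommGroup G] [DecidableEq G]
    (u : G) (S : Set G) (f : Finset G → Finset G → G)
    (hc : ∀ U : Finset G, ↑U ⊆ S → f U ∅ = 0)
    (he : ∀ (U V : Finset G) (c : G), ↑U ⊆ S → ↑V ⊆ S → c ∈ S → c ∉ U → c ∉ V →
      f (insert c U) {u} - f (insert c U) V = f U (insert c V) - f U V) :
    ∀ D X : Finset G, ↑X ⊆ S → ↑D ⊆ S → Disjoint X D →
      f X {u} - f X D = ∑ W ∈ D.powerset, ((-1 : ℤ)) ^ W.card • f (X ∪ W) {u} := by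
  intro D
  induction D using Finset.induction_on with
  | empty =>
      intro X hX _ _
      simp [hc X hX]
  | @insert c D' hcD' ih =>
      intro X hX hD hdisj
      have hcS : c ∈ S := hD (by simp)
      have hD'S : ↑D' ⊆ S := fun x hx => hD (by simp [hx])
      have hcX : c ∉ X := fun h => (Finset.disjoint_left.mp hdisj h) (by simp)
      have hdisj' : Disjoint X D' := hdisj.mono_right (Finset.subset_insert _ _)
      have hdisj2 : Disjoint (insert c X) D' := by
        rw [Finset.disjoint_left]
        intro a ha haD'
        rcases Finset.mem_insert.mp ha with rfl | ha
        · exact hcD' haD'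
        · exact (Finset.disjoint_left.mp hdisj' ha) haD'
      have hXc : ↑(insert c X) ⊆ S := by
        intro x hx
        rcases Finset.mem_insert.mp hx with rfl | hx
        · exact hcS
        · exact hX hx
      rw [Finset.sum_powerset_insert hcD']
      have e1 := ih X hX hD'S hdisj'
      have e2 := ih (insert c X) hXc hD'S hdisj2
      have heq : ∀ W ∈ D'.powerset,
          ((-1 : ℤ)) ^ (insert c W).card • f (X ∪ insert c W) {u}
            = -(((-1 : ℤ)) ^ W.card • f (insert c X ∪ W) {u}) := by
        intro W hW
        have hcW : c ∉ W := fun h => hcD' (Finset.mem_powerset.mp hW h)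
        rw [Finset.card_insert_of_notMem hcW, pow_succ, mul_comm, mul_smul,
          neg_one_smul, Finset.union_insert, Finset.insert_union]
      rw [Finset.sum_congr rfl heq, Finset.sum_neg_distrib, ← e1, ← e2]
      have key := he X D' c hX hD'S hcS hcX hcD'
      rw [key]
      abel

/-- In an interval effect algebra `[0,u]` of a partially ordered abelian
group `G`, every compatibility support mapping `f` for `S` (with `u ∈ S`)
gives rise to a witness mapping `β(X) = ⟨X|{u}⟩`, and
`D(X,A) = D_β(X,A)` for all finite `X ⊆ A ⊆ S`. -/
theorem witnessMapping_of_csm {G : Type*} [AddCommGroup G] [PartialOrder G]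
    [CovariantClass G G (· + ·) (· ≤ ·)] [DecidableEq G]
    (u : G) (hu : 0 ≤ u)
    (S : Set G) (hSmem : ∀ x ∈ S, 0 ≤ x ∧ x ≤ u) (huS : u ∈ S)
    (f : Finset G → Finset G → G)
    (hrange : ∀ U V : Finset G, ↑U ⊆ S → ↑V ⊆ S → 0 ≤ f U V ∧ f U V ≤ u)
    (ha : ∀ U V₁ V₂ : Finset G, ↑U ⊆ S → ↑V₁ ⊆ S → ↑V₂ ⊆ S → V₁ ⊆ V₂ →
      f U V₁ ≤ f U V₂)
    (hb : ∀ U V : Finset G, ↑U ⊆ S → ↑V ⊆ S → f U V ≤ f U {u})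
    (hc : ∀ U : Finset G, ↑U ⊆ S → f U ∅ = 0)
    (hd : ∀ c ∈ S, f ∅ {c} = c)
    (he : ∀ (U V : Finset G) (c : G), ↑U ⊆ S → ↑V ⊆ S → c ∈ S → c ∉ U → c ∉ V →
      f (insert c U) {u} - f (insert c U) V = f U (insert c V) - f U V) :
    (f ∅ {u} = u) ∧
    (∀ c ∈ S, f {c} {u} = c) ∧
    (∀ X A : Finset G, ↑A ⊆ S → X ⊆ A →
      0 ≤ ∑ Z ∈ A.powerset.filter (X ⊆ ·), ((-1 : ℤ)) ^ (X.card + Z.card) • f Z {u}) ∧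
    (∀ X A : Finset G, ↑A ⊆ S → X ⊆ A →
      f X {u} - f X (A \ X) =
        ∑ Z ∈ A.powerset.filter (X ⊆ ·), ((-1 : ℤ)) ^ (X.card + Z.card) • f Z {u}) := by
  have main : ∀ X A : Finset G, ↑A ⊆ S → X ⊆ A →
      f X {u} - f X (A \ X) =
        ∑ Z ∈ A.powerset.filter (X ⊆ ·), ((-1 : ℤ)) ^ (X.card + Z.card) • f Z {u} := by
    intro X A hA hXA
    have hX : ↑X ⊆ S := fun x hx => hA (hXA hx)
    have hD : (↑(A \ X) : Set G) ⊆ S := by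
      intro x hx
      exact hA (Finset.sdiff_subset (by exact_mod_cast hx))
    rw [csm_key u S f hc he (A \ X) X hX hD Finset.disjoint_sdiff]
    refine Finset.sum_bij' (fun W _ => X ∪ W) (fun Z _ => Z \ X) ?_ ?_ ?_ ?_ ?_
    · intro W hW
      rw [Finset.mem_powerset] at hW
      rw [Finset.mem_filter, Finset.mem_powerset]
      exact ⟨Finset.union_subset hXA (hW.trans Finset.sdiff_subset),
        Finset.subset_union_left⟩
    · intro Z hZ
      rw [Finset.mem_filter, Finset.mem_powerset] at hZ
      rw [Finset.mem_powerset]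
      exact Finset.sdiff_subset_sdiff hZ.1 (le_refl _)
    · intro W hW
      rw [Finset.mem_powerset] at hW
      have hWd : Disjoint X W :=
        Finset.disjoint_sdiff.mono_right hW
      rw [Finset.union_sdiff_cancel_left hWd]
    · intro Z hZ
      rw [Finset.mem_filter, Finset.mem_powerset] at hZ
      exact Finset.union_sdiff_of_subset hZ.2
    · intro W hW
      rw [Finset.mem_powerset] at hW
      have hWd : Disjoint X W := Finset.disjoint_sdiff.mono_right hW
      have hcard : (X ∪ W).card = X.card + W.card := Finset.card_union_of_disjoint hWd
      rw [hcard, show X.card + (X.card + W.card) = W.card + 2 * X.card from by omega,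
        pow_add, pow_mul, neg_one_sq, one_pow, mul_one]
  refine ⟨hd u huS, ?_, ?_, main⟩
  · intro c hcS
    have h := he ∅ ∅ c (by simp) (by simp) hcS (by simp) (by simp)
    have h1 : f {c} ∅ = 0 := hc {c} (by simp [hcS])
    have h2 : f ∅ ∅ = 0 := hc ∅ (by simp)
    have h3 : f ∅ {c} = c := hd c hcS
    simpa [h1, h2, h3] using h
  · intro X A hA hXA
    rw [← main X A hA hXA]
    have hX : ↑X ⊆ S := fun x hx => hA (hXA hx)
    have hD : (↑(A \ X) : Set G) ⊆ S := by
      intro x hx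
      exact hA (Finset.sdiff_subset (by exact_mod_cast hx))
    exact sub_nonneg.2 (hb X (A \ X) hX hD)
end
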